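/- Let G be a simple graph on n vertices, let t ≥ 2 be an integer, and let c be a cost vector of nonnegative reals. If G' is a spanning subgraph of G, then θ_t(G, c) ≤ θ_t(G', c) + c_t · |E(G) \ E(G')| · n^{t-2} and π_t(G, c) ≤ π_t(G', c) + c_t · |E(G) \ E(G')| · n^{t-2}. -/

import Mathlib

open scoped Classical
open Finset

/-- `K` is a clique of `G`: a nonempty set of pairwise adjacent vertices. -/
def IsCliqueOf {V : Type} [Fintype V] [DecidableEq V] (G : SimpleGraph V) (K : Finset V) : Prop :=
  K.Nonempty ∧ G.IsClique (K : Set V)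

/-- Total `c`-cost of a weighting `f` of the finsets of vertices. -/
noncomputable def cliqueCost {V : Type} [Fintype V] [DecidableEq V]
    (c : ℕ → ℝ) (f : Finset V → ℝ) : ℝ :=
  ∑ K : Finset V, c K.card * f K

/-- `f` is a fractional `t`-clique cover of `G`. -/
def IsFracCover {V : Type} [Fintype V] [DecidableEq V]
    (t : ℕ) (G : SimpleGraph V) (f : Finset V → ℝ) : Prop :=
  (∀ K, 0 ≤ f K) ∧ (∀ K, ¬ IsCliqueOf G K → f K = 0) ∧
  ∀ T : Finset V, T.card = t → G.IsClique (T : Set V) →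
    1 ≤ ∑ K ∈ Finset.univ.filter (fun K => T ⊆ K), f K

/-- `f` is a fractional `t`-clique decomposition of `G`. -/
def IsFracDecomp {V : Type} [Fintype V] [DecidableEq V]
    (t : ℕ) (G : SimpleGraph V) (f : Finset V → ℝ) : Prop :=
  (∀ K, 0 ≤ f K) ∧ (∀ K, ¬ IsCliqueOf G K → f K = 0) ∧
  ∀ T : Finset V, T.card = t → G.IsClique (T : Set V) →
    ∑ K ∈ Finset.univ.filter (fun K => T ⊆ K), f K = 1

/-- `f` is an integer (`{0,1}`-valued) `t`-clique cover of `G`. -/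
def IsIntCover {V : Type} [Fintype V] [DecidableEq V]
    (t : ℕ) (G : SimpleGraph V) (f : Finset V → ℝ) : Prop :=
  IsFracCover t G f ∧ ∀ K, f K = 0 ∨ f K = 1

/-- `f` is an integer (`{0,1}`-valued) `t`-clique decomposition of `G`. -/
def IsIntDecomp {V : Type} [Fintype V] [DecidableEq V]
    (t : ℕ) (G : SimpleGraph V) (f : Finset V → ℝ) : Prop :=
  IsFracDecomp t G f ∧ ∀ K, f K = 0 ∨ f K = 1

/-- θ*_t(G,c): minimum total c-cost of a fractional t-clique cover. -/
noncomputable def thetaFrac {V : Type} [Fintype V] [DecidableEq V]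
    (t : ℕ) (G : SimpleGraph V) (c : ℕ → ℝ) : ℝ :=
  sInf { x | ∃ f, IsFracCover t G f ∧ x = cliqueCost c f }

/-- θ_t(G,c): minimum total c-cost of an integer t-clique cover. -/
noncomputable def thetaInt {V : Type} [Fintype V] [DecidableEq V]
    (t : ℕ) (G : SimpleGraph V) (c : ℕ → ℝ) : ℝ :=
  sInf { x | ∃ f, IsIntCover t G f ∧ x = cliqueCost c f }

/-- π*_t(G,c): minimum total c-cost of a fractional t-clique decomposition. -/
noncomputable def piFrac {V : Type} [Fintype V] [DecidableEq V]
    (t : ℕ) (G : SimpleGraph V) (c : ℕ → ℝ) : ℝ :=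
  sInf { x | ∃ f, IsFracDecomp t G f ∧ x = cliqueCost c f }

/-- π_t(G,c): minimum total c-cost of an integer t-clique decomposition. -/
noncomputable def piInt {V : Type} [Fintype V] [DecidableEq V]
    (t : ℕ) (G : SimpleGraph V) (c : ℕ → ℝ) : ℝ :=
  sInf { x | ∃ f, IsIntDecomp t G f ∧ x = cliqueCost c f }

/-- `G` is complete multipartite: vertices can be assigned to parts so that
adjacency holds exactly between distinct parts. -/
def IsCompleteMultipartite {V : Type} [Fintype V] [DecidableEq V]
    (G : SimpleGraph V) : Prop :=
  ∃ p : V → ℕ, ∀ u v, G.Adj u v ↔ p u ≠ p v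

/-!
Add to a `t`-clique cover (or decomposition) of `G'` the indicator of the `t`-cliques of `G` that
are not cliques of `G'`. The result is a cover (decomposition) of `G`: a `t`-clique of `G'` is
covered as before, because the added cliques have size `t` and are not cliques of `G'`, and any
other `t`-clique `T` of `G` is covered exactly once, by `T` itself, since no clique of `G'`
contains it. Each added clique contains an edge of `G` missing from `G'` plus `t - 2` further
vertices, so there are at most `|E(G) \ E(G')| · C(n, t - 2) ≤ |E(G) \ E(G')| · n ^ (t - 2)` of
them, each of cost `c t`.
-/

lemma csInf_le_csInf_add {A B : Set ℝ} {b : ℝ} (hB : B.Nonempty) (hA : BddBelow A)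
    (h : ∀ x ∈ B, ∃ y ∈ A, y ≤ x + b) : sInf A ≤ sInf B + b := by
  rw [← sub_le_iff_le_add]
  refine le_csInf hB fun x hx => ?_
  obtain ⟨y, hy, hyx⟩ := h x hx
  linarith [csInf_le hA hy]

namespace Finset

variable {α : Type} [Fintype α]

lemma card_filter_powersetCard_superset_le [DecidableEq α] (A : Finset α) (t : ℕ) :
    #{K ∈ powersetCard t univ | A ⊆ K} ≤ (Fintype.card α).choose (t - #A) := by
  calc _ ≤ #((powersetCard (t - #A) univ).image (· ∪ A)) := by
        refine card_le_card fun K hK => ?_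
        obtain ⟨hKt, hAK⟩ := mem_filter.1 hK
        rw [mem_powersetCard_univ] at hKt
        exact mem_image.2
          ⟨K \ A, by simp [card_sdiff_of_subset hAK, hKt], sdiff_union_of_subset hAK⟩
    _ ≤ (Fintype.card α).choose (t - #A) := by
        simpa using card_image_le (s := powersetCard (t - #A) (univ : Finset α))

end Finset

namespace SimpleGraph

open Finset

variable {α : Type} [Fintype α] [DecidableEq α]

lemma card_filter_powersetCard_mem_sym2_le {e : Sym2 α} (he : ¬ e.IsDiag) (t : ℕ) :
    #{K ∈ powersetCard t univ | e ∈ K.sym2} ≤ (Fintype.card α).choose (t - 2) := by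
  induction e using Sym2.ind with
  | h u v =>
    have huv : u ≠ v := by simpa using he
    simpa [mk_mem_sym2_iff, insert_subset_iff, card_pair huv] using
      card_filter_powersetCard_superset_le {u, v} t

lemma card_filter_powersetCard_not_isIndepSet_le (H : SimpleGraph α) [DecidableRel H.Adj]
    (t : ℕ) :
    #((powersetCard t univ).filter fun K : Finset α => ¬ H.IsIndepSet (K : Set α)) ≤
      H.edgeSet.ncard * (Fintype.card α).choose (t - 2) := by
  rw [Set.ncard_eq_toFinset_card']
  calc _ ≤ #(H.edgeSet.toFinset.biUnion fun e => {K ∈ powersetCard t univ | e ∈ K.sym2}) := by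
        refine card_le_card fun K hK => ?_
        obtain ⟨hKt, hK⟩ := mem_filter.1 hK
        obtain ⟨u, hu, v, hv, -, huv⟩ : ∃ u ∈ K, ∃ v ∈ K, u ≠ v ∧ H.Adj u v := by
          simpa [isIndepSet_iff, Set.Pairwise] using hK
        exact mem_biUnion.2
          ⟨s(u, v), by simpa using huv, mem_filter.2 ⟨hKt, mk_mem_sym2_iff.2 ⟨hu, hv⟩⟩⟩
    _ ≤ #H.edgeSet.toFinset * (Fintype.card α).choose (t - 2) :=
        card_biUnion_le_card_mul _ _ _ fun e he =>
          card_filter_powersetCard_mem_sym2_le (H.not_isDiag_of_mem_edgeSet (by simpa using he)) t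

end SimpleGraph

section CliqueCover

open Finset SimpleGraph

variable {V : Type} [Fintype V] [DecidableEq V]

lemma cliqueCost_add (c : ℕ → ℝ) (f g : Finset V → ℝ) :
    cliqueCost c (f + g) = cliqueCost c f + cliqueCost c g := by
  simp only [cliqueCost, Pi.add_apply, mul_add, sum_add_distrib]

lemma cliqueCost_indicator {S : Finset (Finset V)} {t : ℕ} (hS : ∀ K ∈ S, #K = t)
    (c : ℕ → ℝ) :
    cliqueCost c ((S : Set (Finset V)).indicator 1) = c t * #S := by
  simp only [cliqueCost, Set.indicator_apply, mem_coe, Pi.one_apply, mul_ite, mul_one, mul_zero]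
  rw [sum_ite_mem, univ_inter, sum_congr rfl fun K hK => by rw [hS K hK], sum_const, nsmul_eq_mul,
    mul_comm]

lemma cliqueCost_nonneg {c : ℕ → ℝ} (hc : ∀ i, 1 ≤ i → 0 ≤ c i) {G : SimpleGraph V}
    {f : Finset V → ℝ} (h0 : ∀ K, 0 ≤ f K) (hG : ∀ K, ¬ IsCliqueOf G K → f K = 0) :
    0 ≤ cliqueCost c f := by
  refine sum_nonneg fun K _ => ?_
  obtain rfl | hK := K.eq_empty_or_nonempty
  · simp [hG ∅ fun h => not_nonempty_empty h.1]
  · exact mul_nonneg (hc _ hK.card_pos) (h0 K)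

lemma sum_superset_indicator {S : Finset (Finset V)} {t : ℕ} (hS : ∀ K ∈ S, #K = t)
    {T : Finset V} (hT : #T = t) :
    ∑ K ∈ univ.filter (fun K => T ⊆ K), (S : Set (Finset V)).indicator 1 K =
      (S : Set (Finset V)).indicator (1 : Finset V → ℝ) T := by
  refine sum_eq_single_of_mem T (by simp) fun K hK hKT => Set.indicator_of_notMem ?_ _
  exact fun hKS => hKT (eq_of_subset_of_card_le (mem_filter.1 hK).2 (by rw [hT, hS K hKS])).symm

lemma sum_superset_eq_zero_of_not_isClique {G : SimpleGraph V} {f : Finset V → ℝ}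
    (hG : ∀ K, ¬ IsCliqueOf G K → f K = 0) {T : Finset V} (hT : ¬ G.IsClique (T : Set V)) :
    ∑ K ∈ univ.filter (fun K => T ⊆ K), f K = 0 :=
  sum_eq_zero fun K hK =>
    hG K fun hK' => hT (hK'.2.subset (coe_subset.2 (mem_filter.1 hK).2))

lemma IsFracDecomp.isFracCover {t : ℕ} {G : SimpleGraph V} {f : Finset V → ℝ}
    (hf : IsFracDecomp t G f) : IsFracCover t G f :=
  ⟨hf.1, hf.2.1, fun T hT hTG => (hf.2.2 T hT hTG).ge⟩

lemma IsIntDecomp.isIntCover {t : ℕ} {G : SimpleGraph V} {f : Finset V → ℝ}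
    (hf : IsIntDecomp t G f) : IsIntCover t G f :=
  ⟨hf.1.isFracCover, hf.2⟩

lemma sInf_cliqueCost_le_add {c : ℕ → ℝ} (hc : ∀ i, 1 ≤ i → 0 ≤ c i) {t : ℕ}
    {G : SimpleGraph V} {P Q : (Finset V → ℝ) → Prop} (hP : ∀ f, P f → IsFracCover t G f)
    (hQ : ∃ f, Q f) (g : Finset V → ℝ) (hQP : ∀ f, Q f → P (f + g)) :
    sInf {x | ∃ f, P f ∧ x = cliqueCost c f} ≤
      sInf {x | ∃ f, Q f ∧ x = cliqueCost c f} + cliqueCost c g := by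
  obtain ⟨f₀, hf₀⟩ := hQ
  refine csInf_le_csInf_add ⟨_, f₀, hf₀, rfl⟩ ⟨0, ?_⟩ ?_
  · rintro _ ⟨f, hf, rfl⟩
    exact cliqueCost_nonneg hc (hP f hf).1 (hP f hf).2.1
  · rintro _ ⟨f, hf, rfl⟩
    exact ⟨_, ⟨f + g, hQP f hf, rfl⟩, (cliqueCost_add c f g).le⟩

lemma isIntDecomp_indicator_cliqueFinset (G : SimpleGraph V) {t : ℕ} (ht : t ≠ 0) :
    IsIntDecomp t G ((G.cliqueFinset t : Set (Finset V)).indicator 1) := by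
  have hS : ∀ K ∈ G.cliqueFinset t, #K = t := fun K hK => (mem_cliqueFinset_iff.1 hK).card_eq
  refine ⟨⟨fun K => Set.indicator_nonneg (fun _ _ => zero_le_one) K, fun K hK => ?_,
    fun T hT hTG => ?_⟩, fun K => ?_⟩
  · refine Set.indicator_of_notMem
      (fun hKG => hK ⟨card_pos.1 ?_, (mem_cliqueFinset_iff.1 hKG).isClique⟩) _
    rw [hS K hKG]
    omega
  · rw [sum_superset_indicator hS hT, Set.indicator_of_mem (by simpa using ⟨hTG, hT⟩)]
    rfl
  · exact Set.indicator_eq_zero_or_self _ _ K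

variable {t : ℕ} {G G' : SimpleGraph V} {f : Finset V → ℝ}

lemma card_eq_of_mem_cliqueFinset_sdiff {K : Finset V}
    (hK : K ∈ G.cliqueFinset t \ G'.cliqueFinset t) : #K = t :=
  (mem_cliqueFinset_iff.1 (mem_sdiff.1 hK).1).card_eq

lemma isCliqueOf_of_mem_cliqueFinset_sdiff {K : Finset V}
    (hK : K ∈ G.cliqueFinset t \ G'.cliqueFinset t) : IsCliqueOf G K := by
  obtain ⟨hKG, hKG'⟩ := mem_sdiff.1 hK
  refine ⟨nonempty_iff_ne_empty.2 ?_, (mem_cliqueFinset_iff.1 hKG).isClique⟩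
  rintro rfl
  exact hKG' (mem_cliqueFinset_iff.2 ⟨by simp, card_eq_of_mem_cliqueFinset_sdiff hK⟩)

lemma eq_zero_of_mem_cliqueFinset_sdiff (hf : ∀ K, ¬ IsCliqueOf G' K → f K = 0) {K : Finset V}
    (hK : K ∈ G.cliqueFinset t \ G'.cliqueFinset t) : f K = 0 :=
  hf K fun hK' => (mem_sdiff.1 hK).2
    (mem_cliqueFinset_iff.2 ⟨hK'.2, card_eq_of_mem_cliqueFinset_sdiff hK⟩)

lemma card_cliqueFinset_sdiff_le (G G' : SimpleGraph V) (t : ℕ) :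
    #(G.cliqueFinset t \ G'.cliqueFinset t) ≤
      (G.edgeSet \ G'.edgeSet).ncard * (Fintype.card V).choose (t - 2) := by
  rw [← edgeSet_sdiff]
  refine le_trans ?_ ((G \ G').card_filter_powersetCard_not_isIndepSet_le t)
  refine card_le_card fun K hK => ?_
  obtain ⟨hKG, hKG'⟩ := mem_sdiff.1 hK
  have hKt := card_eq_of_mem_cliqueFinset_sdiff hK
  have hnot : ¬ G'.IsClique (K : Set V) := fun h => hKG' (mem_cliqueFinset_iff.2 ⟨h, hKt⟩)
  refine mem_filter.2 ⟨mem_powersetCard_univ.2 hKt, fun hind => hnot fun u hu v hv huv => ?_⟩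
  by_contra hG'
  exact hind hu hv huv ⟨(mem_cliqueFinset_iff.1 hKG).isClique hu hv huv, hG'⟩

noncomputable def cliqueSdiffIndicator (t : ℕ) (G G' : SimpleGraph V) : Finset V → ℝ :=
  Set.indicator ↑(G.cliqueFinset t \ G'.cliqueFinset t) 1

lemma cliqueCost_cliqueSdiffIndicator (c : ℕ → ℝ) :
    cliqueCost c (cliqueSdiffIndicator t G G') = c t * #(G.cliqueFinset t \ G'.cliqueFinset t) :=
  cliqueCost_indicator (fun _ => card_eq_of_mem_cliqueFinset_sdiff) c

lemma sum_superset_cliqueSdiffIndicator {T : Finset V} (hT : #T = t) :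
    ∑ K ∈ univ.filter (fun K => T ⊆ K), cliqueSdiffIndicator t G G' K =
      cliqueSdiffIndicator t G G' T :=
  sum_superset_indicator (fun _ => card_eq_of_mem_cliqueFinset_sdiff) hT

lemma cliqueSdiffIndicator_nonneg (K : Finset V) : 0 ≤ cliqueSdiffIndicator t G G' K :=
  Set.indicator_nonneg (fun _ _ => zero_le_one) K

lemma cliqueSdiffIndicator_of_not_isClique {T : Finset V} (hT : #T = t)
    (hTG : G.IsClique (T : Set V)) (hTG' : ¬ G'.IsClique (T : Set V)) :
    cliqueSdiffIndicator t G G' T = 1 :=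
  Set.indicator_of_mem (by simp_all [isNClique_iff]) _

lemma cliqueSdiffIndicator_of_isClique {T : Finset V} (hTG' : G'.IsClique (T : Set V)) :
    cliqueSdiffIndicator t G G' T = 0 :=
  Set.indicator_of_notMem (by simp_all [isNClique_iff]) _

lemma add_cliqueSdiffIndicator_of_not_isCliqueOf (hle : G' ≤ G)
    (hf : ∀ K, ¬ IsCliqueOf G' K → f K = 0) {K : Finset V} (hK : ¬ IsCliqueOf G K) :
    (f + cliqueSdiffIndicator t G G') K = 0 := by
  rw [Pi.add_apply, hf K fun h => hK ⟨h.1, h.2.mono hle⟩, zero_add]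
  exact Set.indicator_of_notMem (fun h => hK (isCliqueOf_of_mem_cliqueFinset_sdiff h)) _

lemma add_cliqueSdiffIndicator_eq_zero_or_one (hf : ∀ K, ¬ IsCliqueOf G' K → f K = 0)
    (h01 : ∀ K, f K = 0 ∨ f K = 1) (K : Finset V) :
    (f + cliqueSdiffIndicator t G G') K = 0 ∨ (f + cliqueSdiffIndicator t G G') K = 1 := by
  rw [Pi.add_apply]
  by_cases hK : K ∈ G.cliqueFinset t \ G'.cliqueFinset t
  · right
    rw [eq_zero_of_mem_cliqueFinset_sdiff hf hK, cliqueSdiffIndicator, Set.indicator_of_mem hK]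
    simp
  · rw [cliqueSdiffIndicator, Set.indicator_of_notMem hK, add_zero]
    exact h01 K

lemma IsFracCover.add_cliqueSdiffIndicator (hle : G' ≤ G) (hf : IsFracCover t G' f) :
    IsFracCover t G (f + cliqueSdiffIndicator t G G') := by
  obtain ⟨h0, hG', hcov⟩ := hf
  refine ⟨fun K => add_nonneg (h0 K) (cliqueSdiffIndicator_nonneg K),
    fun K => add_cliqueSdiffIndicator_of_not_isCliqueOf hle hG', fun T hT hTG => ?_⟩
  simp only [Pi.add_apply, sum_add_distrib]
  rw [sum_superset_cliqueSdiffIndicator hT]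
  by_cases hTG' : G'.IsClique (T : Set V)
  · linarith [hcov T hT hTG', cliqueSdiffIndicator_nonneg (t := t) (G := G) (G' := G') T]
  · rw [cliqueSdiffIndicator_of_not_isClique hT hTG hTG']
    linarith [sum_nonneg fun K (_ : K ∈ univ.filter (fun K => T ⊆ K)) => h0 K]

lemma IsFracDecomp.add_cliqueSdiffIndicator (hle : G' ≤ G) (hf : IsFracDecomp t G' f) :
    IsFracDecomp t G (f + cliqueSdiffIndicator t G G') := by
  obtain ⟨h0, hG', hdec⟩ := hf
  refine ⟨fun K => add_nonneg (h0 K) (cliqueSdiffIndicator_nonneg K),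
    fun K => add_cliqueSdiffIndicator_of_not_isCliqueOf hle hG', fun T hT hTG => ?_⟩
  simp only [Pi.add_apply, sum_add_distrib]
  rw [sum_superset_cliqueSdiffIndicator hT]
  by_cases hTG' : G'.IsClique (T : Set V)
  · rw [hdec T hT hTG', cliqueSdiffIndicator_of_isClique hTG', add_zero]
  · rw [sum_superset_eq_zero_of_not_isClique hG' hTG',
      cliqueSdiffIndicator_of_not_isClique hT hTG hTG', zero_add]

lemma IsIntCover.add_cliqueSdiffIndicator (hle : G' ≤ G) (hf : IsIntCover t G' f) :
    IsIntCover t G (f + cliqueSdiffIndicator t G G') :=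
  ⟨hf.1.add_cliqueSdiffIndicator hle, add_cliqueSdiffIndicator_eq_zero_or_one hf.1.2.1 hf.2⟩

lemma IsIntDecomp.add_cliqueSdiffIndicator (hle : G' ≤ G) (hf : IsIntDecomp t G' f) :
    IsIntDecomp t G (f + cliqueSdiffIndicator t G G') :=
  ⟨hf.1.add_cliqueSdiffIndicator hle, add_cliqueSdiffIndicator_eq_zero_or_one hf.1.2.1 hf.2⟩

end CliqueCover

/-- Lemma 4.7: deleting edges changes the integer `t`-clique cover and
decomposition numbers by at most `c_t |E(G) \ E(G')| n^{t-2}`. -/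
theorem stmt14 (n t : ℕ) (ht : 2 ≤ t) (c : ℕ → ℝ) (hc : ∀ i, 1 ≤ i → 0 ≤ c i)
    (G G' : SimpleGraph (Fin n)) (hsub : G' ≤ G) :
    thetaInt t G c ≤ thetaInt t G' c +
      c t * ((G.edgeSet \ G'.edgeSet).ncard : ℝ) * (n : ℝ) ^ (t - 2) ∧
    piInt t G c ≤ piInt t G' c +
      c t * ((G.edgeSet \ G'.edgeSet).ncard : ℝ) * (n : ℝ) ^ (t - 2) := by
  have hcost : cliqueCost c (cliqueSdiffIndicator t G G') ≤
      c t * ((G.edgeSet \ G'.edgeSet).ncard : ℝ) * (n : ℝ) ^ (t - 2) := by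
    have hcount : #(G.cliqueFinset t \ G'.cliqueFinset t) ≤
        (G.edgeSet \ G'.edgeSet).ncard * n ^ (t - 2) := by
      simpa using (card_cliqueFinset_sdiff_le G G' t).trans
        (Nat.mul_le_mul_left _ (by simpa using Nat.choose_le_pow n (t - 2)))
    rw [cliqueCost_cliqueSdiffIndicator, mul_assoc]
    exact mul_le_mul_of_nonneg_left (by exact_mod_cast hcount) (hc t (by omega))
  have hdecomp := isIntDecomp_indicator_cliqueFinset G' (t := t) (by omega)
  constructor
  · exact (sInf_cliqueCost_le_add hc (fun _ hf => hf.1) ⟨_, hdecomp.isIntCover⟩ _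
      fun _ hf => hf.add_cliqueSdiffIndicator hsub).trans (add_le_add le_rfl hcost)
  · exact (sInf_cliqueCost_le_add hc (fun _ hf => hf.isIntCover.1) ⟨_, hdecomp⟩ _
      fun _ hf => hf.add_cliqueSdiffIndicator hsub).trans (add_le_add le_rfl hcost)
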